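/- arXiv:2203.00555 — 3 statements merged into one kernel-verified Lean document; each statement's English description precedes it below -/
import Mathlib

section
/- For all real numbers α > 0, x, v, w, the Euclidean norm of the gradient of (v, w) ↦ (α + v·w)·x/√(α² + v²·w²) equals |x| · α · |α − v·w| · √(v² + w²) / (α² + v²·w²)^{3/2}. -/
/-!
The sub-layer depends on `θ = (v, w)` only through the product `t = v·w`: it is
`h(t) = (α + t)·x/√(α² + t²)`, with `h'(t) = x·α·(α − t)/(α² + t²)^{3/2}`. By the chain rule its
gradient is `h'(v·w)·(w, v)`, whose norm is `|h'(v·w)|·√(v² + w²)`.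
-/

open Real

section Gradient

variable {F : Type*} [NormedAddCommGroup F] [InnerProductSpace ℝ F] [CompleteSpace F]
  {f g : F → ℝ} {f' g' : F}

theorem HasDerivAt.comp_hasGradientAt {h : ℝ → ℝ} {h' : ℝ} (x : F) (hh : HasDerivAt h h' (g x))
    (hg : HasGradientAt g g' x) : HasGradientAt (h ∘ g) (h' • g') x := by
  rw [hasGradientAt_iff_hasFDerivAt] at hg ⊢
  refine (hh.comp_hasFDerivAt x hg).congr_fderiv ?_
  rw [map_smul]

theorem HasGradientAt.mul {x : F} (hf : HasGradientAt f f' x) (hg : HasGradientAt g g' x) :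
    HasGradientAt (fun y => f y * g y) (f x • g' + g x • f') x := by
  rw [hasGradientAt_iff_hasFDerivAt] at hf hg ⊢
  refine (hf.mul hg).congr_fderiv ?_
  rw [map_add, map_smul, map_smul]

end Gradient

theorem EuclideanSpace.hasGradientAt_apply {ι : Type*} [Fintype ι] [DecidableEq ι] (i : ι)
    (θ : EuclideanSpace ℝ ι) : HasGradientAt (fun θ : EuclideanSpace ℝ ι => θ i)
      (EuclideanSpace.single i 1) θ := by
  rw [hasGradientAt_iff_hasFDerivAt]
  refine (EuclideanSpace.proj i : EuclideanSpace ℝ ι →L[ℝ] ℝ).hasFDerivAt.congr_fderiv ?_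
  ext y
  simp [EuclideanSpace.inner_single_left]

theorem EuclideanSpace.norm_smul_single_add_smul_single (a b : ℝ) :
    ‖a • EuclideanSpace.single (1 : Fin 2) (1 : ℝ) + b • EuclideanSpace.single 0 1‖ =
      √(a ^ 2 + b ^ 2) := by
  rw [EuclideanSpace.norm_eq]
  simp [Fin.sum_univ_two, add_comm]

theorem hasDerivAt_add_mul_div_sqrt_sq_add_sq {α t : ℝ} (x : ℝ) (h : α ^ 2 + t ^ 2 ≠ 0) :
    HasDerivAt (fun t => (α + t) * x / √(α ^ 2 + t ^ 2))
      (x * α * (α - t) / √(α ^ 2 + t ^ 2) ^ 3) t := by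
  have hs : √(α ^ 2 + t ^ 2) ≠ 0 := by positivity
  have hsq : √(α ^ 2 + t ^ 2) ^ 2 = α ^ 2 + t ^ 2 := sq_sqrt (by positivity)
  have := ((((hasDerivAt_id t).const_add α).mul_const x).div
    (((hasDerivAt_pow 2 t).const_add (α ^ 2)).sqrt h) hs)
  refine this.congr_deriv ?_
  simp only [id, Nat.cast_ofNat]
  field_simp
  linear_combination x * hsq

/-- The Euclidean norm of the gradient of the simplified scalar DeepNorm sub-layer
`f(x; v, w) = (α + v·w)·x/√(α² + v²·w²)` with respect to the parameter vector `θ = (v, w)`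
equals `|x|·α·|α − v·w|·√(v² + w²)/(α² + v²·w²)^{3/2}`. -/
theorem deepnorm_sublayer_param_grad_norm
    (α x v w : ℝ) (hα : 0 < α) :
    ‖gradient
        (fun θ : EuclideanSpace ℝ (Fin 2) =>
          (α + θ 0 * θ 1) * x / Real.sqrt (α ^ 2 + (θ 0) ^ 2 * (θ 1) ^ 2))
        ((WithLp.equiv 2 (Fin 2 → ℝ)).symm ![v, w])‖ =
      |x| * α * |α - v * w| * Real.sqrt (v ^ 2 + w ^ 2) /
        (α ^ 2 + v ^ 2 * w ^ 2) ^ ((3 : ℝ) / 2) := by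
  set θ₀ : EuclideanSpace ℝ (Fin 2) := (WithLp.equiv 2 (Fin 2 → ℝ)).symm ![v, w]
  have hpos : 0 < α ^ 2 + v ^ 2 * w ^ 2 := by positivity
  have hprod : HasGradientAt (fun θ : EuclideanSpace ℝ (Fin 2) => θ 0 * θ 1)
      (v • EuclideanSpace.single 1 1 + w • EuclideanSpace.single 0 1) θ₀ :=
    (EuclideanSpace.hasGradientAt_apply 0 θ₀).mul (EuclideanSpace.hasGradientAt_apply 1 θ₀)
  have hgrad := (hasDerivAt_add_mul_div_sqrt_sq_add_sq (t := v * w) x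
    (by positivity)).comp_hasGradientAt θ₀ hprod
  simp only [Function.comp_def, mul_pow] at hgrad
  rw [hgrad.gradient, norm_smul, EuclideanSpace.norm_smul_single_add_smul_single,
    rpow_div_two_eq_sqrt 3 hpos.le, rpow_ofNat, Real.norm_eq_abs, abs_div, abs_mul, abs_mul,
    abs_of_pos hα, abs_of_pos (by positivity : 0 < √(α ^ 2 + v ^ 2 * w ^ 2) ^ 3)]
  ring
end

section
/- For all real numbers α > 0, x, v, w with 0 < v, 0 < w and v·w ≤ α, the Euclidean norm of the gradient of (v, w) ↦ (α + v·w)·x/√(α² + v²·w²) is at most |x| · √(v² + w²)/α, i.e. at most |x| · ‖θ‖/α where θ = (v, w). (This is the bound ‖∂F/∂θ‖ ≲ ‖θ‖/α for the parameters of the last sub-layer used in the derivation of DeepNorm's constants.) -/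
/-!
The function factors as `φ (v * w)` with `φ p = (α + p) x / √(α² + p²)`, so its gradient is
`φ'(v w) • (w, v)` and has norm `|φ'(v w)| · ‖θ‖`. Writing `s = √(α² + p²)`,
`φ'(p) = x α (α - p) / s³`, and for `p ≥ 0` both `α ≤ s` and `|α - p| ≤ s`, whence
`α² |α - p| ≤ s³` and `|φ'(p)| ≤ |x| / α`.
-/

open Real InnerProductSpace

theorem HasDerivAt.comp_hasGradientAt_s6 {F : Type*} [NormedAddCommGroup F]
    [InnerProductSpace ℝ F] [CompleteSpace F] {φ : ℝ → ℝ} {φ' : ℝ} {g : F → ℝ} {g' a : F}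
    (hφ : HasDerivAt φ φ' (g a)) (hg : HasGradientAt g g' a) :
    HasGradientAt (fun y => φ (g y)) (φ' • g') a := by
  rw [hasGradientAt_iff_hasFDerivAt] at hg ⊢
  refine (hφ.comp_hasFDerivAt a hg).congr_fderiv ?_
  ext h
  simp

theorem hasGradientAt_coord_mul_coord (a : EuclideanSpace ℝ (Fin 2)) :
    HasGradientAt (fun θ : EuclideanSpace ℝ (Fin 2) => θ 0 * θ 1) !₂[a 1, a 0] a := by
  rw [hasGradientAt_iff_hasFDerivAt]
  refine ((EuclideanSpace.proj (𝕜 := ℝ) (0 : Fin 2)).hasFDerivAt.mul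
    (EuclideanSpace.proj (𝕜 := ℝ) (1 : Fin 2)).hasFDerivAt (x := a)).congr_fderiv ?_
  ext h
  simp [EuclideanSpace.inner_eq_star_dotProduct, Fin.sum_univ_two, dotProduct]
  ring

theorem EuclideanSpace.norm_two (a b : ℝ) : ‖!₂[a, b]‖ = √(a ^ 2 + b ^ 2) := by
  simp [EuclideanSpace.norm_eq, Fin.sum_univ_two]

theorem abs_sub_le_sqrt_sq_add_sq {a b : ℝ} (hab : 0 ≤ a * b) : |a - b| ≤ √(a ^ 2 + b ^ 2) :=
  abs_le_sqrt (by nlinarith)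

theorem hasDerivAt_deepnorm_sublayer {α : ℝ} (hα : α ≠ 0) (x p : ℝ) :
    HasDerivAt (fun p : ℝ => (α + p) * x / √(α ^ 2 + p ^ 2))
      (x * α * (α - p) / √(α ^ 2 + p ^ 2) ^ 3) p := by
  have hq : 0 < α ^ 2 + p ^ 2 := by positivity
  have hs : 0 < √(α ^ 2 + p ^ 2) := sqrt_pos.2 hq
  have hnum := ((hasDerivAt_id' p).const_add α).mul_const x
  have hden := ((hasDerivAt_pow 2 p).const_add (α ^ 2)).sqrt hq.ne'
  refine (hnum.div hden hs.ne').congr_deriv ?_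
  field_simp
  rw [sq_sqrt hq.le]
  ring

theorem abs_deriv_deepnorm_sublayer_le {α : ℝ} (hα : 0 < α) (x : ℝ) {p : ℝ} (hp : 0 ≤ p) :
    |x * α * (α - p) / √(α ^ 2 + p ^ 2) ^ 3| ≤ |x| / α := by
  set s := √(α ^ 2 + p ^ 2)
  have hαs : α ≤ s := le_sqrt_of_sq_le (by nlinarith)
  have hps : |α - p| ≤ s := abs_sub_le_sqrt_sq_add_sq (by positivity)
  have hs : 0 < s := hα.trans_le hαs
  have hcube : α ^ 2 * |α - p| ≤ s ^ 3 :=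
    calc α ^ 2 * |α - p| ≤ s ^ 2 * s := by gcongr
      _ = s ^ 3 := by ring
  rw [abs_div, abs_mul, abs_mul, abs_of_pos hα, abs_of_pos (pow_pos hs 3),
    div_le_div_iff₀ (by positivity) hα]
  calc |x| * α * |α - p| * α = |x| * (α ^ 2 * |α - p|) := by ring
    _ ≤ |x| * s ^ 3 := by gcongr

theorem deepnorm_sublayer_param_grad_norm_le_general
    (α x v w : ℝ) (hα : 0 < α) (hv : 0 < v) (hw : 0 < w) :
    ‖gradient
        (fun θ : EuclideanSpace ℝ (Fin 2) =>
          (α + θ 0 * θ 1) * x / Real.sqrt (α ^ 2 + (θ 0) ^ 2 * (θ 1) ^ 2))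
        ((WithLp.equiv 2 (Fin 2 → ℝ)).symm ![v, w])‖ ≤
      |x| * Real.sqrt (v ^ 2 + w ^ 2) / α := by
  have hθ : (WithLp.equiv 2 (Fin 2 → ℝ)).symm ![v, w] = !₂[v, w] := rfl
  simp_rw [hθ, ← mul_pow]
  have hgrad := (hasDerivAt_deepnorm_sublayer hα.ne' x (v * w)).comp_hasGradientAt_s6
    (g := fun θ : EuclideanSpace ℝ (Fin 2) => θ 0 * θ 1) (hasGradientAt_coord_mul_coord !₂[v, w])
  have hθnorm : √(!₂[v, w] 1 ^ 2 + !₂[v, w] 0 ^ 2) = √(v ^ 2 + w ^ 2) := by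
    simp [add_comm]
  rw [hgrad.gradient, norm_smul, EuclideanSpace.norm_two, hθnorm, norm_eq_abs,
    mul_div_right_comm |x|]
  gcongr
  exact abs_deriv_deepnorm_sublayer_le hα x (mul_pos hv hw).le

/-- For `0 < v, w` and `v·w ≤ α`, the Euclidean norm of the gradient of the simplified
scalar DeepNorm sub-layer `f(x; v, w) = (α + v·w)·x/√(α² + v²·w²)` with respect to the
parameter vector `θ = (v, w)` is at most `|x|·‖θ‖/α = |x|·√(v² + w²)/α`. -/
theorem deepnorm_sublayer_param_grad_norm_le
    (α x v w : ℝ) (hα : 0 < α) (hv : 0 < v) (hw : 0 < w) (hvw : v * w ≤ α) :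
    ‖gradient
        (fun θ : EuclideanSpace ℝ (Fin 2) =>
          (α + θ 0 * θ 1) * x / Real.sqrt (α ^ 2 + (θ 0) ^ 2 * (θ 1) ^ 2))
        ((WithLp.equiv 2 (Fin 2 → ℝ)).symm ![v, w])‖ ≤
      |x| * Real.sqrt (v ^ 2 + w ^ 2) / α :=
  deepnorm_sublayer_param_grad_norm_le_general α x v w hα hv hw
end

section
/- Let α ≥ 1 be real and let v, w, v*, w* ∈ (0, 1]. Then for every real x, |(α + v*·w*)·x/√(α² + v*²·w*²) − (α + v·w)·x/√(α² + v²·w²)| ≤ (√2·|x|/α) · √((v* − v)² + (w* − w)²). (Exact one-sub-layer version of the model-update bound of Theorem 1: the change of a sub-layer's output caused by updating its parameters θ = (v, w) to θ* = (v*, w*) is at most (√2·|x|/α)·‖θ* − θ‖.) -/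
/-!
Writing the sub-layer as `x ↦ g(v w) x` with `g p = (α + p) / √(α² + p²)`, the claim splits
into a Lipschitz bound `|g q - g p| ≤ |q - p| / α` for `p, q ≥ 0` and the bound
`|v' w' - v w| ≤ |v' - v| + |w' - w| ≤ √2 ‖θ' - θ‖` for weights of size at most one.
The Lipschitz bound is algebraic: rationalising the numerator of `g q - g p` gives
`2 α (q - p) (α² - p q)`, and the denominator dominates `2 α² |α² - p q|` because each of
`√(α² + p²)`, `√(α² + q²)` is at least `α` and at least `p`, resp. `q`.
-/

open Real

/-- The gain of a scalar DeepNorm sub-layer: `f(x; v, w) = deepNormScale α (v * w) * x`. -/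
noncomputable def deepNormScale (α p : ℝ) : ℝ := (α + p) / √(α ^ 2 + p ^ 2)

lemma abs_deepNormScale_sub_le {α p q : ℝ} (hα : 0 < α) (hp : 0 ≤ p) (hq : 0 ≤ q) :
    |deepNormScale α q - deepNormScale α p| ≤ |q - p| / α := by
  set s := √(α ^ 2 + p ^ 2)
  set t := √(α ^ 2 + q ^ 2)
  have hs2 : s ^ 2 = α ^ 2 + p ^ 2 := sq_sqrt (by positivity)
  have ht2 : t ^ 2 = α ^ 2 + q ^ 2 := sq_sqrt (by positivity)
  have hαs : α ≤ s := le_sqrt_of_sq_le (by nlinarith)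
  have hαt : α ≤ t := le_sqrt_of_sq_le (by nlinarith)
  have hps : p ≤ s := le_sqrt_of_sq_le (by nlinarith)
  have hqt : q ≤ t := le_sqrt_of_sq_le (by nlinarith)
  have hs : 0 < s := hα.trans_le hαs
  have ht : 0 < t := hα.trans_le hαt
  set D := (α + q) * s + (α + p) * t
  have hD : 0 < D := by positivity
  have hdiff : deepNormScale α q - deepNormScale α p =
      2 * α * (q - p) * (α ^ 2 - p * q) / (D * s * t) := by
    rw [deepNormScale, deepNormScale, div_sub_div _ _ ht.ne' hs.ne',
      div_eq_div_iff (by positivity) (by positivity)]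
    linear_combination (s * t) * ((α + q) ^ 2 * hs2 - (α + p) ^ 2 * ht2)
  have hden : 2 * α ^ 2 * |α ^ 2 - p * q| ≤ D * s * t := by
    have hst : α ^ 2 ≤ s * t := by nlinarith
    rcases abs_cases (α ^ 2 - p * q) with ⟨h, -⟩ | ⟨h, -⟩ <;> rw [h]
    · have : 2 * α ^ 2 ≤ D := by nlinarith
      nlinarith [mul_nonneg hp hq]
    · have : 2 * (p * q) ≤ D := by nlinarith
      nlinarith [mul_nonneg hp hq]
  rw [hdiff, abs_div, abs_of_pos (by positivity : 0 < D * s * t),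
    div_le_div_iff₀ (by positivity) hα]
  calc |2 * α * (q - p) * (α ^ 2 - p * q)| * α
        = |q - p| * (2 * α ^ 2 * |α ^ 2 - p * q|) := by
          rw [abs_mul, abs_mul, abs_of_pos (by positivity : 0 < 2 * α)]; ring
    _ ≤ |q - p| * (D * s * t) := by gcongr

lemma abs_mul_sub_mul_le_of_abs_le_one {a a' b b' : ℝ} (ha : |a| ≤ 1) (hb' : |b'| ≤ 1) :
    |a' * b' - a * b| ≤ |a' - a| + |b' - b| :=
  calc |a' * b' - a * b| = |(a' - a) * b' + a * (b' - b)| := by ring_nf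
    _ ≤ |a' - a| * |b'| + |a| * |b' - b| := by
        rw [← abs_mul, ← abs_mul]; exact abs_add_le _ _
    _ ≤ |a' - a| + |b' - b| := by
        nlinarith [abs_nonneg (a' - a), abs_nonneg (b' - b), abs_nonneg a, abs_nonneg b']

lemma add_le_sqrt_two_mul_sqrt_sq_add_sq (a b : ℝ) : a + b ≤ √2 * √(a ^ 2 + b ^ 2) := by
  rw [← sqrt_mul zero_le_two]
  exact le_sqrt_of_sq_le (by nlinarith [sq_nonneg (a - b)])

/-- Exact one-sub-layer version of the model-update bound of Theorem 1: for `α ≥ 1` and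
weights `v, w, v*, w* ∈ (0, 1]`, updating the parameters `(v, w)` of a scalar DeepNorm
sub-layer to `(v*, w*)` changes the output at input `x` by at most
`(√2·|x|/α)·√((v* − v)² + (w* − w)²)`. -/
theorem deepnorm_sublayer_update_bound
    (α v w v' w' x : ℝ) (hα : 1 ≤ α)
    (hv : v ∈ Set.Ioc (0 : ℝ) 1) (hw : w ∈ Set.Ioc (0 : ℝ) 1)
    (hv' : v' ∈ Set.Ioc (0 : ℝ) 1) (hw' : w' ∈ Set.Ioc (0 : ℝ) 1) :
    |(α + v' * w') * x / Real.sqrt (α ^ 2 + v' ^ 2 * w' ^ 2) -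
        (α + v * w) * x / Real.sqrt (α ^ 2 + v ^ 2 * w ^ 2)| ≤
      Real.sqrt 2 * |x| / α * Real.sqrt ((v' - v) ^ 2 + (w' - w) ^ 2) := by
  have hweight : ∀ u ∈ Set.Ioc (0 : ℝ) 1, |u| ≤ 1 := fun u hu =>
    abs_le.2 ⟨by linarith [hu.1], hu.2⟩
  have hprod : |v' * w' - v * w| ≤ √2 * √((v' - v) ^ 2 + (w' - w) ^ 2) := by
    simpa only [sq_abs] using
      (abs_mul_sub_mul_le_of_abs_le_one (hweight v hv) (hweight w' hw')).trans
        (add_le_sqrt_two_mul_sqrt_sq_add_sq |v' - v| |w' - w|)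
  calc _ = |x| * |deepNormScale α (v' * w') - deepNormScale α (v * w)| := by
        rw [← abs_mul]; congr 1; simp only [deepNormScale, mul_pow]; ring
    _ ≤ |x| * (|v' * w' - v * w| / α) := by
        gcongr
        exact abs_deepNormScale_sub_le (by linarith) (mul_pos hv.1 hw.1).le (mul_pos hv'.1 hw'.1).le
    _ ≤ |x| * (√2 * √((v' - v) ^ 2 + (w' - w) ^ 2) / α) := by gcongr
    _ = √2 * |x| / α * √((v' - v) ^ 2 + (w' - w) ^ 2) := by ring
end
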